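/- arXiv:1411.3110 — 5 statements merged into one kernel-verified Lean document; each statement's English description precedes it below -/
import Mathlib

section
/- Let A, R > 0 and for each parameter u with |u| > R let θ_u : ℂ → ℂ satisfy |θ_u(w)| ≤ A/|w|² for |w| > R. Fix u ∈ ℂ with Re(u) > R' where R' > R + A/R, fix n ∈ ℕ, and define the orbit u_{n,0} = u + n and u_{n,i+1} = u_{n,i} - 1 + θ_{u+n+i+1}(u_{n,i}). Then for all 0 ≤ i ≤ n, Re(u_{n,i}) > R + n - i. -/
/-! The real part drops by `1 + A/a²` at most while it stays above `a`, and
`1/a + 1/a² ≤ 1/(a - 1)`, so the quantity `Re (v i) - (R + n - i) + A/(R + n - i)` never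
decreases. Starting above `A/R` it stays there, which keeps `Re (v i) > R + n - i`. -/

lemma div_add_div_sq_le_div_sub_one {A a : ℝ} (hA : 0 ≤ A) (ha : 1 < a) :
    A / a + A / a ^ 2 ≤ A / (a - 1) := by
  have ha₀ : 0 < a := by linarith
  have ha₁ : 0 < a - 1 := by linarith
  rw [div_add_div _ _ ha₀.ne' (by positivity), div_le_div_iff₀ (by positivity) ha₁]
  nlinarith [mul_nonneg hA (sq_nonneg a)]

lemma re_sub_lower_le_re_sub_one_add {A a : ℝ} {w z : ℂ} (hA : 0 ≤ A) (ha : 0 < a)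
    (haw : a < w.re) (hz : ‖z‖ ≤ A / ‖w‖ ^ 2) :
    w.re - 1 - A / a ^ 2 ≤ (w - 1 + z).re := by
  have hw : a < ‖w‖ := haw.trans_le (Complex.re_le_norm w)
  have hz' : ‖z‖ ≤ A / a ^ 2 :=
    hz.trans (div_le_div_of_nonneg_left hA (by positivity) (by gcongr))
  have hre : -‖z‖ ≤ z.re := neg_le_of_abs_le (Complex.abs_re_le_norm z)
  simp only [Complex.add_re, Complex.sub_re, Complex.one_re]
  linarith

theorem orbit_re_lower_bound {A R : ℝ} (hA : 0 ≤ A) (hR : 0 < R) {θ : ℂ → ℂ → ℂ}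
    (hθ : ∀ u w : ℂ, R < ‖u‖ → R < ‖w‖ → ‖θ u w‖ ≤ A / ‖w‖ ^ 2)
    {u : ℂ} (hu : R + A / R < u.re) {n : ℕ} {v : ℕ → ℂ} (hv0 : v 0 = u + n)
    (hvs : ∀ i : ℕ, v (i + 1) = v i - 1 + θ (u + n + i + 1) (v i)) :
    ∀ i ≤ n, R + n - i + A / R - A / (R + n - i) < (v i).re := by
  intro i
  induction i with
  | zero =>
    intro _
    have : 0 ≤ A / (R + n) := by positivity
    simp only [hv0, Complex.add_re, Complex.natCast_re, CharP.cast_eq_zero, sub_zero]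
    linarith
  | succ i ih =>
    intro hin
    set a : ℝ := R + n - i with ha
    have hRa : R + 1 ≤ a := by
      have : ((i + 1 : ℕ) : ℝ) ≤ n := by exact_mod_cast hin
      push_cast at this
      linarith
    have hIH : a + A / R - A / a < (v i).re := ih (by omega)
    have hAa : A / a ≤ A / R := div_le_div_of_nonneg_left hA hR (by linarith)
    have hva : a < (v i).re := by linarith
    have hparam : R < ‖u + n + i + 1‖ := by
      refine lt_of_lt_of_le ?_ (Complex.re_le_norm _)
      have : 0 ≤ A / R := by positivity
      simp only [Complex.add_re, Complex.natCast_re, Complex.one_re]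
      linarith [(Nat.cast_nonneg n : (0 : ℝ) ≤ n), (Nat.cast_nonneg i : (0 : ℝ) ≤ i)]
    have hstep := re_sub_lower_le_re_sub_one_add hA (by linarith) hva
      (hθ _ _ hparam (by linarith [Complex.re_le_norm (v i)]))
    have hsum := div_add_div_sq_le_div_sub_one hA (by linarith : 1 < a)
    have hcast : R + n - ((i + 1 : ℕ) : ℝ) = a - 1 := by push_cast; ring
    rw [hcast, hvs i]
    linarith

/-- invariance lemma for the non-autonomous orbit
`v 0 = u + n`, `v (i+1) = v i - 1 + θ_{u+n+i+1} (v i)`: if `|θ_u w| ≤ A/|w|²`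
for `|u|, |w| > R`, `R' > R + A/R` and `Re u > R'`, then `Re (v i) > R + n - i`
for all `0 ≤ i ≤ n`. -/
theorem stmt2 (A R R' : ℝ) (hA : 0 < A) (hR : 0 < R) (hR' : R + A/R < R')
    (θ : ℂ → ℂ → ℂ)
    (hθ : ∀ u w : ℂ, R < ‖u‖ → R < ‖w‖ →
      ‖θ u w‖ ≤ A / ‖w‖ ^ 2)
    (u : ℂ) (hu : R' < u.re) (n : ℕ)
    (v : ℕ → ℂ) (hv0 : v 0 = u + n)
    (hvs : ∀ i : ℕ, v (i+1) = v i - 1 + θ (u + n + i + 1) (v i)) :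
    ∀ i ≤ n, R + n - i < (v i).re := by
  intro i hi
  have hbound := orbit_re_lower_bound hA.le hR hθ (hR'.trans hu) hv0 hvs i hi
  have hni : R ≤ R + n - i := by
    have : (i : ℝ) ≤ n := by exact_mod_cast hi
    linarith
  have : A / (R + n - i) ≤ A / R := div_le_div_of_nonneg_left hA.le hR hni
  linarith
end

section
/- Let A, R > 0 with exp(A/R²) < 2, and let (C_k) be a sequence of nonnegative reals satisfying C_0 ≤ A/(R+n+1)² and the recursion C_k ≤ C_{k-1}·(1 + 2A/(R+n+1-k)³) + 2A/((R+n+k)²(R+n-k)²) for 1 ≤ k ≤ n. Then there is a constant (e.g. 4A for R sufficiently large depending only on A) such that C_n ≤ 4A/(R+n)² for all large R. -/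
/-!
Discrete Grönwall bounds `C n` by `exp (∑ aₖ) * (C 0 + ∑ bₖ)`. Comparing `2/x³` with
`1/(x-1)² - 1/x²` telescopes the growth exponent to at most `A/R²`, so the exponential factor is
below `2`; comparing `1/y²` with `1/(y-1) - 1/y` telescopes the forcing terms to at most
`2A/((R+n)²(R-1))`, which is `≤ A/(R+n)²` once `R ≥ 3`.
-/

open Real Finset

theorem discrete_gronwall_range {u b c : ℕ → ℝ} {N : ℕ} (hu₀ : 0 ≤ u 0)
    (hu : ∀ n < N, u (n + 1) ≤ (1 + c n) * u n + b n) (hc : ∀ n < N, 0 ≤ c n)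
    (hb : ∀ n < N, 0 ≤ b n) :
    u N ≤ (u 0 + ∑ k ∈ range N, b k) * exp (∑ i ∈ range N, c i) := by
  -- Freeze the sequence after time `N` so that the global version applies.
  set u' : ℕ → ℝ := fun n => u (min n N)
  set c' : ℕ → ℝ := fun n => if n < N then c n else 0
  set b' : ℕ → ℝ := fun n => if n < N then b n else 0
  have hu' : ∀ n ≥ 0, u' (n + 1) ≤ (1 + c' n) * u' n + b' n := by
    intro n _
    by_cases hn : n < N
    · simpa [u', c', b', hn, Nat.succ_le_of_lt hn, hn.le] using hu n hn
    · simp [u', c', b', hn, show N ≤ n by omega, show N ≤ n + 1 by omega]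
  have hc' : ∀ n ≥ 0, 0 ≤ c' n := fun n _ => by
    by_cases hn : n < N <;> simp [c', hn, hc]
  have hb' : ∀ n ≥ 0, 0 ≤ b' n := fun n _ => by
    by_cases hn : n < N <;> simp [b', hn, hb]
  have hglobal := discrete_gronwall (u := u') (by simpa [u'] using hu₀) hu' hc' hb' (Nat.zero_le N)
  have hsum : ∀ f : ℕ → ℝ, ∑ k ∈ range N, (if k < N then f k else 0) = ∑ k ∈ range N, f k :=
    fun f => sum_congr rfl fun k hk => if_pos (mem_range.1 hk)
  simpa only [u', c', b', Nat.Ico_zero_eq_range, hsum, min_self, Nat.zero_min] using hglobal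

theorem sum_range_le_sub_of_le_sub {M : Type*} [AddCommGroup M] [PartialOrder M]
    [IsOrderedAddMonoid M] {f g : ℕ → M} {n : ℕ} (h : ∀ k < n, f k ≤ g (k + 1) - g k) :
    ∑ k ∈ range n, f k ≤ g n - g 0 :=
  (sum_le_sum fun k hk => h k (mem_range.1 hk)).trans_eq (sum_range_sub g n)

theorem two_div_cube_le_one_div_sq_sub {x : ℝ} (hx : 1 < x) :
    2 / x ^ 3 ≤ 1 / (x - 1) ^ 2 - 1 / x ^ 2 := by
  have hx₁ : 0 < x - 1 := sub_pos.2 hx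
  rw [div_sub_div _ _ (by positivity) (by positivity),
    div_le_div_iff₀ (by positivity) (by positivity)]
  nlinarith [pow_pos hx₁ 2, pow_pos hx₁ 3, mul_pos hx₁ hx₁]

theorem one_div_sq_le_one_div_sub {x : ℝ} (hx : 1 < x) :
    1 / x ^ 2 ≤ 1 / (x - 1) - 1 / x := by
  have hx₁ : 0 < x - 1 := sub_pos.2 hx
  rw [div_sub_div _ _ hx₁.ne' (by positivity), div_le_div_iff₀ (by positivity) (by positivity)]
  nlinarith

theorem sum_range_two_mul_div_cube_le {A R : ℝ} (hA : 0 ≤ A) (hR : 0 < R) (n : ℕ) :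
    ∑ k ∈ range n, 2 * A / (R + n - k) ^ 3 ≤ A / R ^ 2 := by
  have hstep : ∀ k < n, 2 * A / (R + n - k) ^ 3 ≤
      A / (R + n - (k + 1 : ℕ)) ^ 2 - A / (R + n - k) ^ 2 := by
    intro k hk
    have hkn : (k : ℝ) + 1 ≤ n := by exact_mod_cast hk
    calc 2 * A / (R + n - k) ^ 3 = A * (2 / (R + n - k) ^ 3) := by ring
      _ ≤ A * (1 / (R + n - k - 1) ^ 2 - 1 / (R + n - k) ^ 2) :=
          mul_le_mul_of_nonneg_left (two_div_cube_le_one_div_sq_sub (by linarith)) hA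
      _ = A / (R + n - (k + 1 : ℕ)) ^ 2 - A / (R + n - k) ^ 2 := by push_cast; ring
  calc ∑ k ∈ range n, 2 * A / (R + n - k) ^ 3
      ≤ A / (R + n - n) ^ 2 - A / (R + n - (0 : ℕ)) ^ 2 :=
        sum_range_le_sub_of_le_sub (g := fun k : ℕ => A / (R + n - k) ^ 2) hstep
    _ ≤ A / R ^ 2 := by
      rw [add_sub_cancel_right, sub_le_self_iff]
      positivity

theorem sum_range_cross_term_le {A R : ℝ} (hA : 0 ≤ A) (hR : 1 < R) (n : ℕ) :
    ∑ k ∈ range n, 2 * A / ((R + n + (k + 1)) ^ 2 * (R + n - (k + 1)) ^ 2) ≤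
      2 * A / ((R + n) ^ 2 * (R - 1)) := by
  set D := 2 * A / (R + n) ^ 2 with hD_def
  have hD : 0 ≤ D := by positivity
  have hstep : ∀ k < n, 2 * A / ((R + n + (k + 1)) ^ 2 * (R + n - (k + 1)) ^ 2) ≤
      D / (R + n - ((k + 1 : ℕ) + 1)) - D / (R + n - (k + 1)) := by
    intro k hk
    have hkn : (k : ℝ) + 1 ≤ n := by exact_mod_cast hk
    have hy : 1 < R + n - (k + 1) := by linarith
    calc 2 * A / ((R + n + (k + 1)) ^ 2 * (R + n - (k + 1)) ^ 2)
        ≤ 2 * A / ((R + n) ^ 2 * (R + n - (k + 1)) ^ 2) := by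
          gcongr 2 * A / (?_ ^ 2 * _)
          exact le_add_of_nonneg_right (by positivity)
      _ = D * (1 / (R + n - (k + 1)) ^ 2) := by rw [hD_def, div_mul_div_comm, mul_one]
      _ ≤ D * (1 / (R + n - (k + 1) - 1) - 1 / (R + n - (k + 1))) :=
          mul_le_mul_of_nonneg_left (one_div_sq_le_one_div_sub hy) hD
      _ = D / (R + n - ((k + 1 : ℕ) + 1)) - D / (R + n - (k + 1)) := by push_cast; ring
  calc _ ≤ D / (R + n - (n + 1)) - D / (R + n - ((0 : ℕ) + 1)) :=
        sum_range_le_sub_of_le_sub (g := fun k : ℕ => D / (R + n - (k + 1))) hstep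
    _ ≤ D / (R - 1) := by
      rw [show R + n - (n + 1) = R - 1 by ring, sub_le_self_iff]
      have : (0 : ℝ) < R + n - ((0 : ℕ) + 1) := by
        push_cast; linarith [(n.cast_nonneg : (0 : ℝ) ≤ n)]
      positivity
    _ = 2 * A / ((R + n) ^ 2 * (R - 1)) := by rw [div_div]

/-- the recursive error estimate. For every `A > 0` there is `R₀` such
that for all `R ≥ R₀` with `exp(A/R²) < 2`, any nonnegative sequence `C` with
`C 0 ≤ A/(R+n+1)²` and
`C k ≤ C (k-1)·(1 + 2A/(R+n+1-k)³) + 2A/((R+n+k)²(R+n-k)²)` for `1 ≤ k ≤ n`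
satisfies `C n ≤ 4A/(R+n)²`. -/
theorem stmt4 (A : ℝ) (hA : 0 < A) :
    ∃ R₀ : ℝ, 0 < R₀ ∧ ∀ R : ℝ, R₀ ≤ R → Real.exp (A/R^2) < 2 →
      ∀ (n : ℕ) (C : ℕ → ℝ), (∀ k, 0 ≤ C k) →
        C 0 ≤ A/(R+(n:ℝ)+1)^2 →
        (∀ k : ℕ, 1 ≤ k → k ≤ n →
          C k ≤ C (k-1) * (1 + 2*A/(R+(n:ℝ)+1-(k:ℝ))^3)
            + 2*A/((R+(n:ℝ)+(k:ℝ))^2*(R+(n:ℝ)-(k:ℝ))^2)) →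
        C n ≤ 4*A/(R+(n:ℝ))^2 := by
  refine ⟨3, by norm_num, fun R hR hexp n C hC hC₀ hrec => ?_⟩
  have hRn : 0 < R + n := by positivity
  have hgron := discrete_gronwall_range (N := n) (hC 0)
    (c := fun k => 2 * A / (R + n - k) ^ 3)
    (b := fun k => 2 * A / ((R + n + (k + 1)) ^ 2 * (R + n - (k + 1)) ^ 2))
    (fun k hk => by
      have h := hrec (k + 1) (by omega) (by omega)
      rwa [Nat.add_sub_cancel, Nat.cast_succ, show R + n + 1 - (k + 1) = R + n - k by ring,
        mul_comm] at h)
    (fun k hk => by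
      have hkn : (k : ℝ) < n := by exact_mod_cast hk
      exact div_nonneg (by positivity) (pow_nonneg (by linarith) 3))
    (fun k _ => by positivity)
  have hgrowth : exp (∑ k ∈ range n, 2 * A / (R + n - k) ^ 3) < 2 :=
    (exp_le_exp.2 (sum_range_two_mul_div_cube_le hA.le (by linarith) n)).trans_lt hexp
  have hC₀' : C 0 ≤ A / (R + n) ^ 2 :=
    hC₀.trans <| div_le_div_of_nonneg_left hA.le (by positivity)
      (pow_le_pow_left₀ hRn.le (by linarith) 2)
  have hcross : 2 * A / ((R + n) ^ 2 * (R - 1)) ≤ A / (R + n) ^ 2 := by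
    rw [div_le_div_iff₀ (by nlinarith) (by positivity)]
    nlinarith [mul_nonneg (mul_nonneg hA.le (sq_nonneg (R + n))) (sub_nonneg.2 hR)]
  have hsum := (sum_range_cross_term_le hA.le (by linarith) n).trans hcross
  calc C n ≤ (C 0 + ∑ k ∈ range n, 2 * A / ((R + n + (k + 1)) ^ 2 * (R + n - (k + 1)) ^ 2)) *
        exp (∑ k ∈ range n, 2 * A / (R + n - k) ^ 3) := hgron
    _ ≤ (A / (R + n) ^ 2 + A / (R + n) ^ 2) * 2 :=
        mul_le_mul (add_le_add hC₀' hsum) hgrowth.le (exp_pos _).le (by positivity)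
    _ = 4 * A / (R + n) ^ 2 := by ring
end

section
/- Let h : {u ∈ ℂ : Re(u) > R'} → ℂ satisfy h(u) = u + 1 + η(u) with |η(u)| ≤ A/|u|² and suppose Re(h(u)) ≥ Re(u) + 1/2 for all u in the domain. Then the sequence γ_n(u) := h^n(u) - n converges uniformly on {Re(u) > R'}, and the limit γ satisfies |γ(u) - u| ≤ C/|u| for some constant C depending only on A and R'. -/
/-!
Writing `η v = h v - v - 1`, the approximant `h^[n] u - n` telescopes to
`u + ∑_{k<n} η (h^[k] u)`. Since `Re (h^[k] u) ≥ R' + k/2`, the `k`-th term is bounded by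
`A / (R' + k/2)²` uniformly on the half-plane, so the Weierstrass M-test gives uniform convergence.
For the decay of `γ u - u`, the same bound shows that the orbit stays within a fixed distance `B`
of `u + k`; together with `‖h^[k] u‖ ≥ R'` this gives `‖h^[k] u‖ ≥ c (‖u‖ + k)`, and summing
`A / (c (‖u‖ + k))²` gives `O(1/‖u‖)`.
-/

open Finset Filter

section SumBounds

variable {a b : ℝ}

theorem one_div_add_mul_succ_sq_le (ha : 0 < a) (hb : 0 < b) (k : ℕ) :
    1 / (a + b * (k + 1)) ^ 2 ≤ 1 / b * (1 / (a + b * k) - 1 / (a + b * (k + 1))) := by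
  have h₀ : 0 < a + b * k := by positivity
  have h₁ : 0 < a + b * (k + 1) := by positivity
  have htele : 1 / b * (1 / (a + b * k) - 1 / (a + b * (k + 1)))
      = 1 / ((a + b * k) * (a + b * (k + 1))) := by
    field_simp
    ring
  rw [htele, sq]
  gcongr
  linarith

theorem sum_range_one_div_add_mul_sq_le (ha : 0 < a) (hb : 0 < b) (n : ℕ) :
    ∑ k ∈ range n, 1 / (a + b * k) ^ 2 ≤ 1 / a ^ 2 + 1 / (a * b) := by
  have htele : ∀ m : ℕ, ∑ k ∈ range m, 1 / (a + b * (k + 1)) ^ 2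
      ≤ 1 / b * (1 / a - 1 / (a + b * m)) := by
    intro m
    induction m with
    | zero => simp
    | succ m ih =>
      rw [sum_range_succ]
      push_cast
      linarith [one_div_add_mul_succ_sq_le ha hb m]
  cases n with
  | zero => simp only [range_zero, sum_empty]; positivity
  | succ m =>
    rw [sum_range_succ']
    have hm : 0 ≤ 1 / b * (1 / (a + b * m)) := by positivity
    have hab : 1 / b * (1 / a) = 1 / (a * b) := by field_simp
    push_cast
    simp only [mul_zero, add_zero]
    linarith [htele m]

theorem summable_one_div_add_mul_sq (ha : 0 < a) (hb : 0 < b) :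
    Summable fun k : ℕ ↦ 1 / (a + b * k) ^ 2 :=
  summable_of_sum_range_le (fun _ ↦ by positivity) (sum_range_one_div_add_mul_sq_le ha hb)

theorem tsum_one_div_add_mul_sq_le (ha : 0 < a) (hb : 0 < b) :
    ∑' k : ℕ, 1 / (a + b * k) ^ 2 ≤ 1 / a ^ 2 + 1 / (a * b) :=
  (summable_one_div_add_mul_sq ha hb).tsum_le_of_sum_range_le
    (sum_range_one_div_add_mul_sq_le ha hb)

end SumBounds

theorem Complex.add_div_two_le_norm_add_ofReal {u : ℂ} {x : ℝ} (hu : 0 ≤ u.re) (hx : 0 ≤ x) :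
    (‖u‖ + x) / 2 ≤ ‖u + x‖ := by
  have hx_le : x ≤ ‖u + x‖ := by
    calc x ≤ (u + x).re := by rw [add_re, ofReal_re]; linarith
      _ ≤ ‖u + x‖ := re_le_norm _
  have hu_le : ‖u‖ ≤ ‖u + x‖ := by
    rw [← sq_le_sq₀ (norm_nonneg _) (norm_nonneg _), ← normSq_eq_norm_sq, ← normSq_eq_norm_sq,
      normSq_apply, normSq_apply]
    simp only [add_re, ofReal_re, add_im, ofReal_im, add_zero]
    nlinarith
  linarith

theorem Function.iterate_sub_nat_eq_add_sum {α : Type*} [AddCommGroupWithOne α] (h : α → α)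
    (u : α) (n : ℕ) : h^[n] u - n = u + ∑ k ∈ range n, (h (h^[k] u) - h^[k] u - 1) := by
  have htele := sum_range_sub (fun k : ℕ ↦ h^[k] u - k) n
  simp only [iterate_succ_apply', Nat.cast_succ, iterate_zero_apply, Nat.cast_zero,
    sub_zero] at htele
  rw [← sub_eq_iff_eq_add', ← htele]
  exact sum_congr rfl fun k _ ↦ by abel

theorem Complex.le_norm_of_norm_sub_add_ofReal_le {u v : ℂ} {x r B : ℝ} (hu : 0 ≤ u.re)
    (hx : 0 ≤ x) (hr : 0 < r) (hB : 0 ≤ B) (hrv : r ≤ ‖v‖) (hvu : ‖v - (u + x)‖ ≤ B) :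
    r / (2 * (r + B)) * (‖u‖ + x) ≤ ‖v‖ := by
  have hnear : (‖u‖ + x) / 2 - B ≤ ‖v‖ := by
    have := norm_sub_norm_le (u + x) v
    rw [norm_sub_rev] at this
    linarith [add_div_two_le_norm_add_ofReal hu hx]
  rw [div_mul_eq_mul_div, div_le_iff₀ (by positivity)]
  nlinarith

section NearTranslation

variable {R' A : ℝ} {h : ℂ → ℂ} {u : ℂ}

theorem add_le_re_iterate (hre : ∀ v : ℂ, R' < v.re → v.re + 1 / 2 ≤ (h v).re) (hu : R' < u.re)
    (k : ℕ) : u.re + 1 / 2 * k ≤ (h^[k] u).re := by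
  induction k with
  | zero => simp
  | succ k ih =>
    rw [Function.iterate_succ_apply']
    have := hre _ (by linarith [k.cast_nonneg (α := ℝ)])
    push_cast
    linarith

theorem lt_re_iterate (hre : ∀ v : ℂ, R' < v.re → v.re + 1 / 2 ≤ (h v).re) (hu : R' < u.re)
    (k : ℕ) : R' < (h^[k] u).re := by
  linarith [add_le_re_iterate hre hu k, k.cast_nonneg (α := ℝ)]

theorem norm_step_iterate_le (hA : 0 ≤ A) (hR' : 0 < R')
    (hstep : ∀ v : ℂ, R' < v.re → ‖h v - v - 1‖ ≤ A / ‖v‖ ^ 2)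
    (hre : ∀ v : ℂ, R' < v.re → v.re + 1 / 2 ≤ (h v).re) (hu : R' < u.re) (k : ℕ) :
    ‖h (h^[k] u) - h^[k] u - 1‖ ≤ A * (1 / (R' + 1 / 2 * k) ^ 2) := by
  have hpos : 0 < R' + 1 / 2 * k := by positivity
  have hle : R' + 1 / 2 * k ≤ ‖h^[k] u‖ := by
    linarith [add_le_re_iterate hre hu k, Complex.re_le_norm (h^[k] u)]
  calc ‖h (h^[k] u) - h^[k] u - 1‖ ≤ A / ‖h^[k] u‖ ^ 2 := hstep _ (lt_re_iterate hre hu k)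
    _ ≤ A / (R' + 1 / 2 * k) ^ 2 := by gcongr
    _ = A * (1 / (R' + 1 / 2 * k) ^ 2) := by rw [mul_one_div]

theorem norm_iterate_sub_add_nat_le (hA : 0 ≤ A) (hR' : 0 < R')
    (hstep : ∀ v : ℂ, R' < v.re → ‖h v - v - 1‖ ≤ A / ‖v‖ ^ 2)
    (hre : ∀ v : ℂ, R' < v.re → v.re + 1 / 2 ≤ (h v).re) (hu : R' < u.re) (k : ℕ) :
    ‖h^[k] u - (u + k)‖ ≤ A * ∑' j : ℕ, 1 / (R' + 1 / 2 * j) ^ 2 := by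
  have hsum := Function.iterate_sub_nat_eq_add_sum h u k
  rw [sub_add_eq_sub_sub_swap, hsum, add_sub_cancel_left, ← tsum_mul_left]
  calc ‖∑ j ∈ range k, (h (h^[j] u) - h^[j] u - 1)‖
      ≤ ∑ j ∈ range k, ‖h (h^[j] u) - h^[j] u - 1‖ := norm_sum_le _ _
    _ ≤ ∑ j ∈ range k, A * (1 / (R' + 1 / 2 * j) ^ 2) :=
        sum_le_sum fun j _ ↦ norm_step_iterate_le hA hR' hstep hre hu j
    _ ≤ ∑' j : ℕ, A * (1 / (R' + 1 / 2 * j) ^ 2) :=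
        ((summable_one_div_add_mul_sq hR' one_half_pos).mul_left A).sum_le_tsum _
          fun j _ ↦ by positivity

theorem tendstoUniformlyOn_iterate_sub_nat (hA : 0 ≤ A) (hR' : 0 < R')
    (hstep : ∀ v : ℂ, R' < v.re → ‖h v - v - 1‖ ≤ A / ‖v‖ ^ 2)
    (hre : ∀ v : ℂ, R' < v.re → v.re + 1 / 2 ≤ (h v).re) :
    TendstoUniformlyOn (fun (n : ℕ) (u : ℂ) ↦ h^[n] u - n)
      (fun u ↦ u + ∑' k : ℕ, (h (h^[k] u) - h^[k] u - 1)) atTop {u : ℂ | R' < u.re} := by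
  have hseries := tendstoUniformlyOn_tsum_nat (s := {u : ℂ | R' < u.re})
    ((summable_one_div_add_mul_sq hR' one_half_pos).mul_left A)
    fun k u hu ↦ norm_step_iterate_le hA hR' hstep hre hu k
  simp_rw [Function.iterate_sub_nat_eq_add_sum]
  rw [Metric.tendstoUniformlyOn_iff] at hseries ⊢
  intro ε hε
  filter_upwards [hseries ε hε] with n hn u hu
  simpa only [dist_add_left] using hn u hu

theorem exists_norm_tsum_step_iterate_le (hA : 0 < A) (hR' : 0 < R')
    (hstep : ∀ v : ℂ, R' < v.re → ‖h v - v - 1‖ ≤ A / ‖v‖ ^ 2)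
    (hre : ∀ v : ℂ, R' < v.re → v.re + 1 / 2 ≤ (h v).re) :
    ∃ C : ℝ, 0 < C ∧ ∀ u : ℂ, R' < u.re →
      ‖∑' k : ℕ, (h (h^[k] u) - h^[k] u - 1)‖ ≤ C / ‖u‖ := by
  set B := A * ∑' j : ℕ, 1 / (R' + 1 / 2 * j) ^ 2
  have hB : 0 ≤ B := by positivity
  set c := R' / (2 * (R' + B))
  have hc : 0 < c := by positivity
  refine ⟨A / c ^ 2 * (1 / R' + 1), by positivity, fun u hu ↦ ?_⟩
  set t := ‖u‖
  have hRt : R' < t := hu.trans_le (Complex.re_le_norm u)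
  have ht : 0 < t := hR'.trans hRt
  have hterm : ∀ k : ℕ, ‖h (h^[k] u) - h^[k] u - 1‖ ≤ A * (1 / (c * t + c * k) ^ 2) := by
    intro k
    have hlow : c * t + c * k ≤ ‖h^[k] u‖ := by
      rw [← mul_add]
      exact Complex.le_norm_of_norm_sub_add_ofReal_le (by linarith) k.cast_nonneg hR' hB
        ((lt_re_iterate hre hu k).le.trans (Complex.re_le_norm _))
        (norm_iterate_sub_add_nat_le hA.le hR' hstep hre hu k)
    calc ‖h (h^[k] u) - h^[k] u - 1‖ ≤ A / ‖h^[k] u‖ ^ 2 := hstep _ (lt_re_iterate hre hu k)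
      _ ≤ A / (c * t + c * k) ^ 2 := by gcongr
      _ = A * (1 / (c * t + c * k) ^ 2) := by rw [mul_one_div]
  have hsummable := (summable_one_div_add_mul_sq (mul_pos hc ht) hc).mul_left A
  calc ‖∑' k : ℕ, (h (h^[k] u) - h^[k] u - 1)‖
      ≤ ∑' k : ℕ, ‖h (h^[k] u) - h^[k] u - 1‖ :=
        norm_tsum_le_tsum_norm (hsummable.of_nonneg_of_le (fun _ ↦ norm_nonneg _) hterm)
    _ ≤ ∑' k : ℕ, A * (1 / (c * t + c * k) ^ 2) :=
        (hsummable.of_nonneg_of_le (fun _ ↦ norm_nonneg _) hterm).tsum_le_tsum hterm hsummable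
    _ ≤ A * (1 / (c * t) ^ 2 + 1 / (c * t * c)) := by
        rw [tsum_mul_left]
        gcongr
        exact tsum_one_div_add_mul_sq_le (mul_pos hc ht) hc
    _ = A / c ^ 2 * (1 / t + 1) / t := by
        field_simp
    _ ≤ A / c ^ 2 * (1 / R' + 1) / t := by
        gcongr

end NearTranslation

/-- for a near-translation `h u = u + 1 + η u` with `|η u| ≤ A/|u|²`
and `Re (h u) ≥ Re u + 1/2` on `{Re u > R'}`, the Fatou coordinate approximants
`γ_n (u) = h^[n] u - n` converge uniformly on the half-plane, and the limit `γ`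
satisfies `|γ u - u| ≤ C/|u|` for some constant `C`. -/
theorem stmt7 (A R' : ℝ) (hA : 0 < A) (hR' : 0 < R')
    (h η : ℂ → ℂ)
    (hform : ∀ u : ℂ, R' < u.re → h u = u + 1 + η u)
    (hη : ∀ u : ℂ, R' < u.re → ‖η u‖ ≤ A / ‖u‖ ^ 2)
    (hre : ∀ u : ℂ, R' < u.re → u.re + 1/2 ≤ (h u).re) :
    ∃ (γ : ℂ → ℂ) (C : ℝ), 0 < C ∧
      TendstoUniformlyOn (fun (n : ℕ) (u : ℂ) => h^[n] u - (n : ℂ)) γ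
        Filter.atTop {u : ℂ | R' < u.re} ∧
      ∀ u : ℂ, R' < u.re → ‖γ u - u‖ ≤ C / ‖u‖ := by
  have hstep : ∀ v : ℂ, R' < v.re → ‖h v - v - 1‖ ≤ A / ‖v‖ ^ 2 := fun v hv ↦ by
    simpa only [hform v hv, add_assoc, add_sub_cancel_left] using hη v hv
  obtain ⟨C, hC, hbound⟩ := exists_norm_tsum_step_iterate_le hA hR' hstep hre
  refine ⟨_, C, hC, tendstoUniformlyOn_iterate_sub_nat hA.le hR' hstep hre, fun u hu ↦ ?_⟩
  simpa only [add_sub_cancel_left] using hbound u hu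
end

section
/- Let f_t(z) = z + z² + O(z³) uniformly in the parameter t (each f_t special, f_t(0)=0), and consider a non-autonomous orbit w_0 = w, w_{k+1} = f_{t_k}(w_k) with all |w_k| small enough that |1/w_{k+1} - 1/w_k + 1| ≤ K. If |w_0| < C/n³, then after n steps |w_n| ≤ |w_0|/(1 - n|w_0|(1+K)) ≤ C'·n²·|w_0|, where C' depends only on C and K. -/
/-!
In the coordinate `u = 1/w` each step moves `u` by `-1` up to an error of size `K`, so
`‖u_n‖ ≥ ‖u_0‖ - n(1+K)`, which inverts to `‖w_n‖ ≤ ‖w_0‖ / (1 - n‖w_0‖(1+K))`. When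
`‖w_0‖ < C/n³` and `n` is large, `n‖w_0‖(1+K) < C(1+K)/n² < 1/2`, so the denominator is at
least `1/2` and `‖w_n‖ ≤ 2‖w_0‖ ≤ 2n²‖w_0‖`.
-/

theorem norm_sub_mul_le_norm_of_norm_sub_le {E : Type*} [SeminormedAddCommGroup E]
    {u : ℕ → E} {L : ℝ} {n : ℕ} (h : ∀ k < n, ‖u (k + 1) - u k‖ ≤ L) :
    ‖u 0‖ - n * L ≤ ‖u n‖ := by
  have hdist : dist (u 0) (u n) ≤ ∑ _i ∈ Finset.range n, L :=
    dist_le_range_sum_of_dist_le n fun hk => by rw [dist_comm, dist_eq_norm]; exact h _ hk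
  rw [Finset.sum_const, Finset.card_range, nsmul_eq_mul, dist_eq_norm] at hdist
  linarith [norm_sub_norm_le (u 0) (u n)]

theorem norm_le_one_add_of_norm_add_one_le {𝕜 : Type*} [NormedDivisionRing 𝕜] {a : 𝕜} {K : ℝ}
    (h : ‖a + 1‖ ≤ K) : ‖a‖ ≤ 1 + K := by
  calc ‖a‖ = ‖(a + 1) - 1‖ := by rw [add_sub_cancel_right]
    _ ≤ ‖a + 1‖ + ‖(1 : 𝕜)‖ := norm_sub_le _ _
    _ ≤ 1 + K := by rw [norm_one]; linarith

theorem norm_le_div_of_inv_step_le {𝕜 : Type*} [NormedDivisionRing 𝕜] {w : ℕ → 𝕜} {K : ℝ}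
    {n : ℕ} (hw0 : w 0 ≠ 0) (hstep : ∀ k < n, ‖1 / w (k + 1) - 1 / w k + 1‖ ≤ K)
    (hD : 0 < 1 - n * ‖w 0‖ * (1 + K)) :
    ‖w n‖ ≤ ‖w 0‖ / (1 - n * ‖w 0‖ * (1 + K)) := by
  have hw0pos : 0 < ‖w 0‖ := norm_pos_iff.mpr hw0
  have hu : ‖(w 0)⁻¹‖ - n * (1 + K) ≤ ‖(w n)⁻¹‖ :=
    norm_sub_mul_le_norm_of_norm_sub_le (u := fun k => (w k)⁻¹) fun k hk => by
      simpa only [one_div] using norm_le_one_add_of_norm_add_one_le (hstep k hk)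
  have hlower : (1 - n * ‖w 0‖ * (1 + K)) / ‖w 0‖ ≤ ‖w n‖⁻¹ := by
    rw [norm_inv, norm_inv] at hu
    calc (1 - n * ‖w 0‖ * (1 + K)) / ‖w 0‖ = ‖w 0‖⁻¹ - n * (1 + K) := by
          field_simp
      _ ≤ ‖w n‖⁻¹ := hu
  calc ‖w n‖ = (‖w n‖⁻¹)⁻¹ := (inv_inv _).symm
    _ ≤ ((1 - n * ‖w 0‖ * (1 + K)) / ‖w 0‖)⁻¹ := inv_anti₀ (by positivity) hlower
    _ = ‖w 0‖ / (1 - n * ‖w 0‖ * (1 + K)) := inv_div _ _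

theorem mul_lt_half_of_lt_div_cube {C L x : ℝ} {n : ℕ} (hC : 0 < C) (hL : 0 < L)
    (hn : 2 * C * L < n) (hx : x < C / (n : ℝ) ^ 3) : n * x * L < 1 / 2 := by
  have hnpos : (0 : ℝ) < n := by nlinarith
  have hn1 : (1 : ℝ) ≤ n := Nat.one_le_cast.mpr (Nat.cast_pos.mp hnpos)
  calc n * x * L < n * (C / (n : ℝ) ^ 3) * L := by gcongr
    _ = C * L / (n : ℝ) ^ 2 := by field_simp
    _ ≤ C * L / n := by gcongr; nlinarith
    _ < 1 / 2 := by rw [div_lt_div_iff₀ hnpos two_pos]; linarith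

/-- vertical contraction control near a parabolic point. For any
`C > 0`, `K ≥ 0` there are `n₀` and `C'` such that for `n ≥ n₀`: any orbit with
`w 0 ≠ 0`, `|1/w_{k+1} - 1/w_k + 1| ≤ K` for `k < n` and `|w 0| < C/n³` satisfies
`|w n| ≤ |w 0|/(1 - n|w 0|(1+K)) ≤ C'·n²·|w 0|`. -/
theorem stmt14 (C K : ℝ) (hC : 0 < C) (hK : 0 ≤ K) :
    ∃ n₀ : ℕ, ∃ C' : ℝ, 0 < C' ∧ ∀ n : ℕ, n₀ ≤ n → ∀ w : ℕ → ℂ, w 0 ≠ 0 →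
      (∀ k < n, ‖1/(w (k+1)) - 1/(w k) + 1‖ ≤ K) →
      ‖w 0‖ < C/(n:ℝ)^3 →
      ‖w n‖ ≤ ‖w 0‖ / (1 - n * ‖w 0‖ * (1+K)) ∧
      ‖w n‖ ≤ C' * n^2 * ‖w 0‖ := by
  refine ⟨⌈2 * C * (1 + K)⌉₊ + 1, 2, two_pos, fun n hn w hw0 hstep hsmall => ?_⟩
  have hnbig : 2 * C * (1 + K) < n :=
    (Nat.le_ceil _).trans_lt (Nat.cast_lt.mpr (Nat.lt_of_succ_le hn))
  have hhalf := mul_lt_half_of_lt_div_cube hC (by linarith) hnbig hsmall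
  have hmain := norm_le_div_of_inv_step_le hw0 hstep (by linarith)
  have hn1 : (1 : ℝ) ≤ (n : ℝ) ^ 2 := one_le_pow₀ (Nat.one_le_cast.mpr (by omega))
  refine ⟨hmain, ?_⟩
  calc ‖w n‖ ≤ ‖w 0‖ / (1 - n * ‖w 0‖ * (1 + K)) := hmain
    _ ≤ ‖w 0‖ / (1 / 2) := by gcongr; linarith
    _ = 2 * 1 * ‖w 0‖ := by ring
    _ ≤ 2 * n ^ 2 * ‖w 0‖ := by gcongr
end

section
/- Let φ : ℂ → ℂ be defined on V_ε and satisfy the functional equation φ(t/(1-t)) = f_0(φ(t)) wherever both sides are defined, with f_0 entire (or holomorphic on the relevant domain). For t ∈ ℂ \ {0}, choose N ∈ ℕ such that t/(1+Nt) ∈ V_ε, and define φ̃(t) := f_0^N(φ(t/(1+Nt))). Then φ̃ is well-defined, i.e. independent of the choice of N: if t/(1+Nt) ∈ V_ε and t/(1+Mt) ∈ V_ε with M ≥ N, then f_0^N(φ(t/(1+Nt))) = f_0^M(φ(t/(1+Mt))). -/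
/-!
Inversion `w ↦ w⁻¹` maps the half-plane `(2ε)⁻¹ < re w` onto the disk `V_ε`, conjugating
`t ↦ t/(1+t)` to the translation `w ↦ w + 1` and sending `t⁻¹ + k` to `t/(1+kt)`. In this
coordinate the functional equation reads `φ w⁻¹ = f₀ (φ (w+1)⁻¹)` on a translation-invariant
half-plane, so iterating it `M - N` times from `w = t⁻¹ + N` gives the claim.
-/

open Complex

lemma norm_inv_sub_ofReal_lt_iff {ε : ℝ} (hε : 0 < ε) (w : ℂ) :
    ‖w⁻¹ - ε‖ < ε ↔ (2 * ε)⁻¹ < w.re := by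
  rcases eq_or_ne w 0 with rfl | hw
  · simp only [inv_zero, zero_sub, norm_neg, norm_real, Real.norm_eq_abs, abs_of_pos hε,
      lt_irrefl, zero_re, false_iff, not_lt]
    positivity
  have hsub : w⁻¹ - ε = (1 - ε * w) / w := by field_simp
  rw [hsub, norm_div, div_lt_iff₀ (norm_pos_iff.2 hw),
    ← pow_lt_pow_iff_left₀ (norm_nonneg _) (by positivity) two_ne_zero, mul_pow,
    Complex.sq_norm, Complex.sq_norm, inv_lt_iff_one_lt_mul₀ (by positivity)]
  simp only [normSq_apply, sub_re, sub_im, one_re, one_im, mul_re, mul_im, ofReal_re, ofReal_im]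
  constructor <;> intro h <;> linarith

lemma iterate_apply_add_natCast {α β : Type*} [AddMonoidWithOne α] {S : Set α}
    (hS : ∀ w ∈ S, w + 1 ∈ S) {f : β → β} {ψ : α → β} (h : ∀ w ∈ S, ψ w = f (ψ (w + 1))) :
    ∀ n : ℕ, ∀ w ∈ S, ψ w = f^[n] (ψ (w + n)) := by
  intro n
  induction n with
  | zero => simp
  | succ n ih =>
    intro w hw
    rw [h w hw, ih (w + 1) (hS w hw), Function.iterate_succ_apply', Nat.cast_succ,
      Nat.cast_add_one_comm, add_assoc]

lemma apply_inv_eq_apply_inv_add_one {ε : ℝ} (hε : 0 < ε) {f φ : ℂ → ℂ}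
    (hfe : ∀ t : ℂ, ‖t - ε‖ < ε → ‖t / (1 - t) - ε‖ < ε → φ (t / (1 - t)) = f (φ t))
    {w : ℂ} (hw : (2 * ε)⁻¹ < w.re) : φ w⁻¹ = f (φ (w + 1)⁻¹) := by
  have hw1 : (2 * ε)⁻¹ < (w + 1).re := by rw [add_re, one_re]; linarith
  have hw10 : w + 1 ≠ 0 := by
    intro h
    rw [h, zero_re] at hw1
    linarith [inv_pos.2 (mul_pos two_pos hε)]
  have hquot : (w + 1)⁻¹ / (1 - (w + 1)⁻¹) = w⁻¹ := by
    rw [inv_eq_one_div, one_sub_div hw10, div_div_div_cancel_right₀ hw10, add_sub_cancel_right,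
      one_div]
  have h := hfe (w + 1)⁻¹ ((norm_inv_sub_ofReal_lt_iff hε _).2 hw1)
    (by rw [hquot]; exact (norm_inv_sub_ofReal_lt_iff hε _).2 hw)
  rwa [hquot] at h

theorem stmt19_general (ε : ℝ) (f₀ φ : ℂ → ℂ)
    (hfe : ∀ t : ℂ, ‖t - (ε : ℂ)‖ < ε →
      ‖t/(1-t) - (ε : ℂ)‖ < ε → φ (t/(1-t)) = f₀ (φ t)) :
    ∀ t : ℂ, t ≠ 0 → ∀ N M : ℕ, N ≤ M →
      ‖t/(1+(N : ℂ)*t) - (ε : ℂ)‖ < ε →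
      ‖t/(1+(M : ℂ)*t) - (ε : ℂ)‖ < ε →
      f₀^[N] (φ (t/(1+(N : ℂ)*t))) = f₀^[M] (φ (t/(1+(M : ℂ)*t))) := by
  intro t ht N M hNM hN _
  have hε : 0 < ε := (norm_nonneg _).trans_lt hN
  have hrecip (k : ℕ) : t / (1 + k * t) = (t⁻¹ + k)⁻¹ := by
    rw [show t⁻¹ + k = (1 + k * t) / t by field_simp, inv_div]
  have hH : (2 * ε)⁻¹ < (t⁻¹ + N).re := (norm_inv_sub_ofReal_lt_iff hε _).1 (hrecip N ▸ hN)
  have hshift := iterate_apply_add_natCast (S := {w : ℂ | (2 * ε)⁻¹ < w.re})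
    (fun w hw => by simp only [Set.mem_ofPred_eq, add_re, one_re] at hw ⊢; linarith)
    (ψ := fun w => φ w⁻¹) (fun w hw => apply_inv_eq_apply_inv_add_one hε hfe hw) (M - N) _ hH
  rw [hrecip, hrecip, hshift, ← Function.iterate_add_apply, add_assoc, ← Nat.cast_add,
    Nat.add_sub_cancel' hNM]

/-- the extension `φ̃(t) = f₀^N(φ(t/(1+Nt)))` of the unstable-manifold
parametrization is independent of the choice of `N`: if `φ` satisfies
`φ(t/(1-t)) = f₀(φ t)` on `V_ε = {|z-ε|<ε}`, `t ≠ 0`, `N ≤ M`, and both `t/(1+Nt)`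
and `t/(1+Mt)` lie in `V_ε`, then `f₀^[N](φ(t/(1+Nt))) = f₀^[M](φ(t/(1+Mt)))`. -/
theorem stmt19 (ε : ℝ) (hε : 0 < ε) (f₀ φ : ℂ → ℂ)
    (hfe : ∀ t : ℂ, ‖t - (ε : ℂ)‖ < ε →
      ‖t/(1-t) - (ε : ℂ)‖ < ε → φ (t/(1-t)) = f₀ (φ t)) :
    ∀ t : ℂ, t ≠ 0 → ∀ N M : ℕ, N ≤ M →
      ‖t/(1+(N : ℂ)*t) - (ε : ℂ)‖ < ε →
      ‖t/(1+(M : ℂ)*t) - (ε : ℂ)‖ < ε →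
      f₀^[N] (φ (t/(1+(N : ℂ)*t))) = f₀^[M] (φ (t/(1+(M : ℂ)*t))) :=
  stmt19_general ε f₀ φ hfe
end
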